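/- arXiv:1304.7332 — 2 statements merged into one kernel-verified Lean document; each statement's English description precedes it below -/
import Mathlib

section
/- Let k be a natural number. A noetherian ring A has property (C_k) if and only if A_P is almost Cohen-Macaulay for every prime P with depth(A_P) ≤ k − 2. -/
open IsLocalRing

/-- The `I`-depth (grade) of an `A`-module `M`: the supremum of lengths of
`M`-regular sequences with entries in `I`. -/
noncomputable def idealDepth {A : Type*} [CommRing A] (I : Ideal A)
    (M : Type*) [AddCommGroup M] [Module A M] : ℕ∞ :=
  sSup {n : ℕ∞ | ∃ rs : List A, (rs.length : ℕ∞) = n ∧ (∀ r ∈ rs, r ∈ I) ∧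
    RingTheory.Sequence.IsRegular M rs}

/-- The depth of a local ring: the depth with respect to its maximal ideal. -/
noncomputable def ringDepth (A : Type*) [CommRing A] [IsLocalRing A] : ℕ∞ :=
  idealDepth (IsLocalRing.maximalIdeal A) A

/-- depth(A_P), the depth of the localization of `A` at the prime `P`. -/
noncomputable def localDepth {A : Type*} [CommRing A] (P : Ideal A) [P.IsPrime] : ℕ∞ :=
  ringDepth (Localization.AtPrime P)

/-- The height of a prime ideal. -/
noncomputable def primeHeight {A : Type*} [CommRing A] (P : Ideal A) [P.IsPrime] : ℕ∞ :=
  Order.height (⟨P, inferInstance⟩ : PrimeSpectrum A)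

/-- A noetherian local ring is almost Cohen-Macaulay if `dim A ≤ 1 + depth A`. -/
def IsAlmostCM (A : Type*) [CommRing A] [IsLocalRing A] : Prop :=
  ringKrullDim A ≤ ((1 + ringDepth A : ℕ∞) : WithBot ℕ∞)

/-- Almost Cohen-Macaulay for a (local) ring presented with an explicit maximal ideal `I`:
`dim R ≤ 1 + depth_I R`. -/
def IsAlmostCMWith (R : Type*) [CommRing R] (I : Ideal R) : Prop :=
  ringKrullDim R ≤ ((1 + idealDepth I R : ℕ∞) : WithBot ℕ∞)

/-- A ring is almost Cohen-Macaulay (Han/Kang) if `depth_P A = depth (A_P)` for all primes. -/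
def IsACM (A : Type*) [CommRing A] : Prop :=
  ∀ (P : Ideal A) [P.IsPrime], idealDepth P A = localDepth P

/-- Serre's condition `(S_k)`: `depth A_P ≥ min (ht P, k)` for all primes `P`. -/
def SerreCond (k : ℕ) (A : Type*) [CommRing A] : Prop :=
  ∀ (P : Ideal A) [P.IsPrime], min (primeHeight P) (k : ℕ∞) ≤ localDepth P

/-- The condition `(C_k)`: `depth A_P ≥ min (ht P, k) - 1` for all primes `P`. -/
def CondC (k : ℕ) (A : Type*) [CommRing A] : Prop :=
  ∀ (P : Ideal A) [P.IsPrime], min (primeHeight P) (k : ℕ∞) ≤ 1 + localDepth P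

/-! Since `dim A_P = ht P`, the ring `A_P` is almost Cohen-Macaulay exactly when
`ht P ≤ 1 + depth A_P`. When `depth A_P ≤ k - 2` this is the inequality of `(C_k)` at `P`;
otherwise `k ≤ 1 + depth A_P` and `(C_k)` holds at `P` for free. -/

theorem ENat.min_le_one_add_iff {h d : ℕ∞} {k : ℕ} :
    min h k ≤ 1 + d ↔ (d + 2 ≤ k → h ≤ 1 + d) := by
  have hk : (k : ℕ∞) ≤ 1 + d ↔ ¬ d + 2 ≤ k := by
    induction d using ENat.recTopCoe with
    | top => simp
    | coe d => norm_cast; omega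
  rw [min_le_iff, hk]
  tauto

theorem ringKrullDim_localization_eq_primeHeight {A : Type*} [CommRing A] (P : Ideal A)
    [P.IsPrime] : ringKrullDim (Localization.AtPrime P) = primeHeight P :=
  (IsLocalization.AtPrime.ringKrullDim_eq_height P _).trans
    (congrArg _ (PrimeSpectrum.height_eq_orderHeight ⟨P, ‹_›⟩))

theorem isAlmostCM_localization_iff {A : Type*} [CommRing A] (P : Ideal A) [P.IsPrime] :
    IsAlmostCM (Localization.AtPrime P) ↔ primeHeight P ≤ 1 + localDepth P := by
  rw [IsAlmostCM, ringKrullDim_localization_eq_primeHeight, WithBot.coe_le_coe, localDepth]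

theorem condC_iff_localization_almostCM_general {A : Type*} [CommRing A] (k : ℕ) :
    CondC k A ↔
      ∀ (P : Ideal A) [P.IsPrime],
        localDepth P + 2 ≤ (k : ℕ∞) → IsAlmostCM (Localization.AtPrime P) := by
  simp only [CondC, isAlmostCM_localization_iff, ENat.min_le_one_add_iff]

theorem condC_iff_localization_almostCM {A : Type*} [CommRing A] [IsNoetherianRing A] (k : ℕ) :
    CondC k A ↔
      ∀ (P : Ideal A) [P.IsPrime],
        localDepth P + 2 ≤ (k : ℕ∞) → IsAlmostCM (Localization.AtPrime P) :=
  condC_iff_localization_almostCM_general k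
end

section
/- Let k be a field and A = k[[X,Y]]/(X², XY). Then A has property (C_2) but does not satisfy Serre's condition (S_2). -/
open IsLocalRing

/-! Write `x`, `y` for the images of `X`, `Y` in `A = k⟦X,Y⟧/(X², XY)`. Every prime of `A`
contains the nilpotent `x`, so a prime containing `y` contains `𝔪 = (x, y)`: the maximal ideal is
minimal over `(y)`, and Krull's principal ideal theorem gives `ht 𝔪 ≤ 1`, hence `(C₂)`. As `y` is
not nilpotent, `ht 𝔪 = 1`; but `𝔪 = ann x` is an associated prime, so
`depth A_𝔪 = 0 < min (ht 𝔪, 2)` and `(S₂)` fails. -/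

lemma primeHeight_eq_height {A : Type*} [CommRing A] (P : Ideal A) [P.IsPrime] :
    primeHeight P = P.height :=
  (PrimeSpectrum.height_eq_orderHeight ⟨P, inferInstance⟩).symm

lemma IsLocalRing.one_le_height_maximalIdeal_of_not_isNilpotent {A : Type*} [CommRing A]
    [IsLocalRing A] {y : A} (hy : y ∈ maximalIdeal A) (hy' : ¬IsNilpotent y) :
    1 ≤ (maximalIdeal A).height := by
  rw [Order.one_le_iff_ne_zero]
  intro h
  have : Ring.KrullDimLE 0 A :=
    Ring.krullDimLE_iff.mpr (by simp [← maximalIdeal_height_eq_ringKrullDim, h])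
  exact hy' (Ring.KrullDimLE.isNilpotent_iff_mem_maximalIdeal.mpr hy)

lemma ringDepth_eq_zero_of_maximalIdeal_le_annihilator {L : Type*} [CommRing L] [IsLocalRing L]
    {z : L} (hz : z ≠ 0) (h : maximalIdeal L ≤ (L ∙ z).annihilator) : ringDepth L = 0 := by
  refine le_antisymm (sSup_le ?_) bot_le
  rintro _ ⟨_ | ⟨r, rs⟩, rfl, hmem, hreg⟩
  · simp
  · have hr : IsSMulRegular L r := ((RingTheory.Sequence.isRegular_cons_iff L r rs).mp hreg).1
    have hrz : r • z = r • 0 := by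
      rw [smul_zero, ← Submodule.mem_annihilator_span_singleton]
      exact h (hmem r List.mem_cons_self)
    exact absurd (hr hrz) hz

lemma localDepth_eq_zero_of_eq_annihilator {A : Type*} [CommRing A] (P : Ideal A) [P.IsPrime]
    {z : A} (hP : P = (A ∙ z).annihilator) : localDepth P = 0 := by
  set L := Localization.AtPrime P
  refine ringDepth_eq_zero_of_maximalIdeal_le_annihilator (z := algebraMap A L z) ?_ ?_
  · intro h
    obtain ⟨s, hs⟩ := (IsLocalization.map_eq_zero_iff P.primeCompl L z).mp h
    exact s.2 (hP.ge (Submodule.mem_annihilator_span_singleton _ _ |>.mpr hs))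
  · rw [← Localization.AtPrime.map_eq_maximalIdeal, Ideal.map_le_iff_le_comap]
    intro a ha
    rw [hP, Submodule.mem_annihilator_span_singleton] at ha
    rw [Ideal.mem_comap, Submodule.mem_annihilator_span_singleton, smul_eq_mul, ← map_mul,
      ← smul_eq_mul, ha, map_zero]

namespace MvPowerSeries

section CommRing

variable {R : Type*} [CommRing R]

theorem mem_span_X_pair_of_constantCoeff_eq_zero {f : MvPowerSeries (Fin 2) R}
    (hf : constantCoeff f = 0) : f ∈ Ideal.span {X 0, X 1} := by
  let f₁ : MvPowerSeries (Fin 2) R := fun d ↦ if d 0 = 0 then coeff d f else 0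
  have coeff_f₁ (d : Fin 2 →₀ ℕ) : coeff d f₁ = if d 0 = 0 then coeff d f else 0 := rfl
  obtain ⟨g, hg⟩ : X 0 ∣ f - f₁ :=
    X_dvd_iff.mpr fun d hd ↦ by rw [map_sub, coeff_f₁, if_pos hd, sub_self]
  obtain ⟨h, hh⟩ : X 1 ∣ f₁ := by
    refine X_dvd_iff.mpr fun d hd ↦ ?_
    rw [coeff_f₁]
    split_ifs with hd₀
    · obtain rfl : d = 0 := by ext i; fin_cases i <;> assumption
      rwa [coeff_zero_eq_constantCoeff_apply]
    · rfl
  exact Ideal.mem_span_pair.mpr ⟨g, h, by linear_combination -hg - hh⟩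

theorem span_X_sq_X_mul_X_le_span_X :
    (Ideal.span {X 0 ^ 2, X 0 * X 1} : Ideal (MvPowerSeries (Fin 2) R)) ≤ Ideal.span {X 0} := by
  rw [Ideal.span_le, Set.pair_subset_iff]
  exact ⟨Ideal.mem_span_singleton.mpr (dvd_pow_self _ two_ne_zero),
    Ideal.mem_span_singleton.mpr (dvd_mul_right _ _)⟩

variable [Nontrivial R]

theorem X_zero_notMem_span_X_sq_X_mul_X :
    (X 0 : MvPowerSeries (Fin 2) R) ∉ Ideal.span {X 0 ^ 2, X 0 * X 1} := by
  intro hX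
  obtain ⟨a, b, hab⟩ := Ideal.mem_span_pair.mp hX
  have hcancel : (a * X 0 + b * X 1 - 1) * X 0 = 0 := by linear_combination hab
  have hunit : a * X 0 + b * X 1 - 1 = 0 :=
    (mul_right_mem_nonZeroDivisors_eq_zero_iff X_mem_nonzeroDivisors).mp hcancel
  have := congrArg constantCoeff hunit
  simp at this

theorem X_one_pow_notMem_span_X_sq_X_mul_X (n : ℕ) :
    (X 1 ^ n : MvPowerSeries (Fin 2) R) ∉ Ideal.span {X 0 ^ 2, X 0 * X 1} := by
  intro hY
  have := X_dvd_iff.mp (Ideal.mem_span_singleton.mp (span_X_sq_X_mul_X_le_span_X hY))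
    (Finsupp.single 1 n) (by simp)
  simp [coeff_X_pow] at this

end CommRing

theorem maximalIdeal_eq_span_X_pair {k : Type*} [Field k] :
    maximalIdeal (MvPowerSeries (Fin 2) k) = Ideal.span {X 0, X 1} := by
  refine le_antisymm (fun f hf ↦ mem_span_X_pair_of_constantCoeff_eq_zero ?_) ?_
  · rwa [mem_maximalIdeal, mem_nonunits_iff, isUnit_iff_constantCoeff,
      isUnit_iff_ne_zero, not_not] at hf
  · simp [Ideal.span_le, Set.pair_subset_iff, mem_maximalIdeal, mem_nonunits_iff,
      isUnit_iff_constantCoeff]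

end MvPowerSeries

open MvPowerSeries

namespace LineWithEmbeddedPoint

variable (k : Type*) [Field k]

local notation "J" => (Ideal.span {X 0 ^ 2, X 0 * X 1} : Ideal (MvPowerSeries (Fin 2) k))
local notation "𝒜" => MvPowerSeries (Fin 2) k ⧸ J
local notation "𝔵" => Ideal.Quotient.mk J (X 0)
local notation "𝔶" => Ideal.Quotient.mk J (X 1)

instance : Nontrivial 𝒜 :=
  Ideal.Quotient.nontrivial_iff.mpr fun h ↦
    X_zero_notMem_span_X_sq_X_mul_X (h ▸ Submodule.mem_top)

instance : IsLocalRing 𝒜 :=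
  IsLocalRing.of_surjective' (Ideal.Quotient.mk J) Ideal.Quotient.mk_surjective

lemma maximalIdeal_eq_span : maximalIdeal 𝒜 = Ideal.span {𝔵, 𝔶} := by
  rw [← map_maximalIdeal_of_surjective _ Ideal.Quotient.mk_surjective,
    maximalIdeal_eq_span_X_pair, Ideal.map_span, Set.image_pair]

lemma mk_X_zero_mul_self : 𝔵 * 𝔵 = 0 := by
  rw [← map_mul, ← sq, Ideal.Quotient.eq_zero_iff_mem]
  exact Ideal.subset_span (by simp)

lemma mk_X_one_mul_mk_X_zero : 𝔶 * 𝔵 = 0 := by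
  rw [← map_mul, mul_comm, Ideal.Quotient.eq_zero_iff_mem]
  exact Ideal.subset_span (by simp)

lemma maximalIdeal_eq_annihilator : maximalIdeal 𝒜 = (𝒜 ∙ 𝔵).annihilator := by
  refine le_antisymm ?_ (le_maximalIdeal fun h ↦ ?_)
  · rw [maximalIdeal_eq_span k, Ideal.span_le, Set.pair_subset_iff, SetLike.mem_coe,
      SetLike.mem_coe, Submodule.mem_annihilator_span_singleton,
      Submodule.mem_annihilator_span_singleton]
    exact ⟨mk_X_zero_mul_self k, mk_X_one_mul_mk_X_zero k⟩
  · rw [Submodule.annihilator_eq_top_iff, Submodule.span_singleton_eq_bot,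
      Ideal.Quotient.eq_zero_iff_mem] at h
    exact X_zero_notMem_span_X_sq_X_mul_X h

lemma maximalIdeal_mem_minimalPrimes : maximalIdeal 𝒜 ∈ (Ideal.span {𝔶}).minimalPrimes := by
  refine ⟨⟨inferInstance, ?_⟩, fun q ⟨hq, hyq⟩ _ ↦ ?_⟩
  · rw [maximalIdeal_eq_span k]
    exact Ideal.span_mono (by simp)
  · have hy : 𝔶 ∈ q := hyq (Ideal.mem_span_singleton_self _)
    have hx : 𝔵 ∈ q := or_self_iff.mp (hq.mem_or_mem (mk_X_zero_mul_self k ▸ q.zero_mem))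
    rw [maximalIdeal_eq_span k, Ideal.span_le, Set.pair_subset_iff]
    exact ⟨hx, hy⟩

lemma height_maximalIdeal : (maximalIdeal 𝒜).height = 1 := by
  refine le_antisymm (Ideal.height_le_one_of_isPrincipal_of_mem_minimalPrimes _ _
    (maximalIdeal_mem_minimalPrimes k)) ?_
  refine IsLocalRing.one_le_height_maximalIdeal_of_not_isNilpotent (y := 𝔶) ?_ ?_
  · rw [maximalIdeal_eq_span k]
    exact Ideal.subset_span (by simp)
  · rintro ⟨n, hn⟩
    rw [← map_pow, Ideal.Quotient.eq_zero_iff_mem] at hn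
    exact X_one_pow_notMem_span_X_sq_X_mul_X n hn

lemma localDepth_maximalIdeal : localDepth (maximalIdeal 𝒜) = 0 :=
  localDepth_eq_zero_of_eq_annihilator _ (maximalIdeal_eq_annihilator k)

end LineWithEmbeddedPoint

theorem condC_two_not_serre_two {k : Type*} [Field k] :
    CondC 2 (MvPowerSeries (Fin 2) k ⧸
      (Ideal.span {MvPowerSeries.X (0 : Fin 2) ^ 2,
        MvPowerSeries.X (0 : Fin 2) * MvPowerSeries.X (1 : Fin 2)} :
          Ideal (MvPowerSeries (Fin 2) k))) ∧
    ¬ SerreCond 2 (MvPowerSeries (Fin 2) k ⧸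
      (Ideal.span {MvPowerSeries.X (0 : Fin 2) ^ 2,
        MvPowerSeries.X (0 : Fin 2) * MvPowerSeries.X (1 : Fin 2)} :
          Ideal (MvPowerSeries (Fin 2) k))) := by
  constructor
  · intro P hP
    have hP₁ : primeHeight P ≤ 1 := by
      rw [primeHeight_eq_height, ← LineWithEmbeddedPoint.height_maximalIdeal k]
      exact Ideal.height_mono (le_maximalIdeal hP.ne_top)
    exact (min_le_left _ _).trans (hP₁.trans le_self_add)
  · intro hS2
    have hm := hS2 (maximalIdeal _)
    rw [primeHeight_eq_height, LineWithEmbeddedPoint.height_maximalIdeal k,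
      LineWithEmbeddedPoint.localDepth_maximalIdeal k] at hm
    norm_num at hm
end
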